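/- arXiv:1609.07840 — 7 statements merged into one kernel-verified Lean document; each statement's English description precedes it below -/
import Mathlib

section
/- Let $\{a_n\}$ be a positive sequence and $s_n = a_n a_{n+2}/a_{n+1}^2$. If there exists $N$ such that $s_n > 1$ for all $n \ge N$ and $s_{n+1}^2 (s_n - 1)(s_{n+2}-1) \ge (s_{n+1}-1)^2$ for all $n \ge N$, then the sequence $\mathscr{L}a_n = a_n a_{n+2} - a_{n+1}^2$ is log-convex for $n \ge N$, i.e., $(\mathscr{L}a_n)(\mathscr{L}a_{n+2}) \ge (\mathscr{L}a_{n+1})^2$ for all $n \ge N$. -/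
/-! With `s n = a n * a (n + 2) / a (n + 1) ^ 2`, each difference factors as
`a n * a (n + 2) - a (n + 1) ^ 2 = (s n - 1) * a (n + 1) ^ 2`, and
`a (n + 1) * a (n + 3) = s (n + 1) * a (n + 2) ^ 2`. Hence the log-convexity inequality for the
differences is the hypothesis on `s`, multiplied by `a (n + 2) ^ 4`. -/

section

variable {K : Type*} [Field K] (a s : ℕ → K)

theorem mul_eq_ratio_mul_sq (hs : ∀ n, s n = a n * a (n + 2) / a (n + 1) ^ 2) {m : ℕ}
    (ha : a (m + 1) ≠ 0) :
    a m * a (m + 2) = s m * a (m + 1) ^ 2 := by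
  rw [hs, div_mul_cancel₀ _ (pow_ne_zero 2 ha)]

theorem sq_mul_sub_sq_le_of_ratio [LinearOrder K] [IsStrictOrderedRing K]
    (hs : ∀ n, s n = a n * a (n + 2) / a (n + 1) ^ 2) (n : ℕ)
    (ha₁ : a (n + 1) ≠ 0) (ha₂ : a (n + 2) ≠ 0) (ha₃ : a (n + 3) ≠ 0)
    (h : (s (n + 1) - 1) ^ 2 ≤ s (n + 1) ^ 2 * ((s n - 1) * (s (n + 2) - 1))) :
    (a (n + 1) * a (n + 3) - a (n + 2) ^ 2) ^ 2 ≤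
      (a n * a (n + 2) - a (n + 1) ^ 2) * (a (n + 2) * a (n + 4) - a (n + 3) ^ 2) := by
  have e₀ := mul_eq_ratio_mul_sq a s hs ha₁
  have e₁ := mul_eq_ratio_mul_sq a s hs ha₂
  have e₂ := mul_eq_ratio_mul_sq a s hs ha₃
  calc (a (n + 1) * a (n + 3) - a (n + 2) ^ 2) ^ 2
      = (s (n + 1) - 1) ^ 2 * (a (n + 2) ^ 2) ^ 2 := by rw [e₁]; ring
    _ ≤ s (n + 1) ^ 2 * ((s n - 1) * (s (n + 2) - 1)) * (a (n + 2) ^ 2) ^ 2 := by gcongr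
    _ = (s n - 1) * (s (n + 2) - 1) * (a (n + 1) * a (n + 3)) ^ 2 := by rw [e₁]; ring
    _ = (a n * a (n + 2) - a (n + 1) ^ 2) * (a (n + 2) * a (n + 4) - a (n + 3) ^ 2) := by
      rw [e₀, e₂]; ring

end

theorem stmt_1_general (a : ℕ → ℝ) (hpos : ∀ n, 0 < a n) (s : ℕ → ℝ)
    (hs : ∀ n, s n = a n * a (n + 2) / (a (n + 1)) ^ 2) (N : ℕ)
    (h2 : ∀ n ≥ N, (s (n + 1)) ^ 2 * ((s n - 1) * (s (n + 2) - 1)) ≥ (s (n + 1) - 1) ^ 2) :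
    ∀ n ≥ N, (a n * a (n + 2) - (a (n + 1)) ^ 2) * (a (n + 2) * a (n + 4) - (a (n + 3)) ^ 2) ≥
      (a (n + 1) * a (n + 3) - (a (n + 2)) ^ 2) ^ 2 := fun n hn =>
  sq_mul_sub_sq_le_of_ratio a s hs n (hpos _).ne' (hpos _).ne' (hpos _).ne' (h2 n hn)

theorem stmt_1 (a : ℕ → ℝ) (hpos : ∀ n, 0 < a n) (s : ℕ → ℝ)
    (hs : ∀ n, s n = a n * a (n + 2) / (a (n + 1)) ^ 2) (N : ℕ)
    (h1 : ∀ n ≥ N, s n > 1)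
    (h2 : ∀ n ≥ N, (s (n + 1)) ^ 2 * ((s n - 1) * (s (n + 2) - 1)) ≥ (s (n + 1) - 1) ^ 2) :
    ∀ n ≥ N, (a n * a (n + 2) - (a (n + 1)) ^ 2) * (a (n + 2) * a (n + 4) - (a (n + 3)) ^ 2) ≥
      (a (n + 1) * a (n + 3) - (a (n + 2)) ^ 2) ^ 2 :=
  stmt_1_general a hpos s hs N h2
end

section
/- Let $\{a_n\}$ be a positive sequence, and suppose $f_n, g_n$ are sequences with $1 < f_n \le a_n a_{n+2}/a_{n+1}^2 \le g_n$ for all $n \ge N$, and $(f_n - 1)(f_{n+2}-1) \ge (1 - 1/g_{n+1})^2$ for all $n \ge N$. Then $(a_na_{n+2}-a_{n+1}^2)(a_{n+2}a_{n+4}-a_{n+3}^2) \ge (a_{n+1}a_{n+3}-a_{n+2}^2)^2$ for all $n \ge N$, i.e., $\{a_n\}_{n \ge N}$ is 2-log-convex. -/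
/-!
Write `r n = a n a (n+2) / a (n+1)^2` and `D n = a n a (n+2) - a (n+1)^2`. Then
`D n = a (n+1)^2 (r n - 1)` and also `D (n+1) = a (n+1) a (n+3) (1 - 1 / r (n+1))`, so
`D n D (n+2) - D (n+1)^2 = (a (n+1) a (n+3))^2 ((r n - 1)(r (n+2) - 1) - (1 - 1 / r (n+1))^2)`.
The bounds `f ≤ r ≤ g` push the hypothesis on `f` and `g` to the same inequality for `r`.
-/

noncomputable def logConvexRatio (a : ℕ → ℝ) (n : ℕ) : ℝ := a n * a (n + 2) / a (n + 1) ^ 2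

def logConvexGap (a : ℕ → ℝ) (n : ℕ) : ℝ := a n * a (n + 2) - a (n + 1) ^ 2

lemma logConvexGap_eq_mul_ratio_sub_one {a : ℕ → ℝ} {n : ℕ} (ha : a (n + 1) ≠ 0) :
    logConvexGap a n = a (n + 1) ^ 2 * (logConvexRatio a n - 1) := by
  unfold logConvexGap logConvexRatio
  field_simp

lemma logConvexGap_eq_mul_one_sub_inv_ratio {a : ℕ → ℝ} {n : ℕ} (hn : a n * a (n + 2) ≠ 0) :
    logConvexGap a n = a n * a (n + 2) * (1 - 1 / logConvexRatio a n) := by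
  unfold logConvexGap logConvexRatio
  rw [one_div_div, mul_sub, mul_div_cancel₀ _ hn, mul_one]

lemma sq_logConvexGap_le_of_ratio {a : ℕ → ℝ} (ha : ∀ n, a n ≠ 0) {n : ℕ}
    (h : (1 - 1 / logConvexRatio a (n + 1)) ^ 2 ≤
      (logConvexRatio a n - 1) * (logConvexRatio a (n + 2) - 1)) :
    logConvexGap a (n + 1) ^ 2 ≤ logConvexGap a n * logConvexGap a (n + 2) := by
  rw [logConvexGap_eq_mul_ratio_sub_one (n := n) (ha _),
    logConvexGap_eq_mul_ratio_sub_one (n := n + 2) (ha _),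
    logConvexGap_eq_mul_one_sub_inv_ratio (n := n + 1) (mul_ne_zero (ha _) (ha _))]
  calc (a (n + 1) * a (n + 3) * (1 - 1 / logConvexRatio a (n + 1))) ^ 2
      = (a (n + 1) * a (n + 3)) ^ 2 * (1 - 1 / logConvexRatio a (n + 1)) ^ 2 := by ring
    _ ≤ (a (n + 1) * a (n + 3)) ^ 2 *
        ((logConvexRatio a n - 1) * (logConvexRatio a (n + 2) - 1)) :=
      mul_le_mul_of_nonneg_left h (sq_nonneg _)
    _ = _ := by ring

lemma one_sub_inv_sq_le_of_bounds {f₀ f₂ r₀ r₁ r₂ g₁ : ℝ}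
    (hf₀ : 1 ≤ f₀) (hfr₀ : f₀ ≤ r₀) (hf₂ : 1 ≤ f₂) (hfr₂ : f₂ ≤ r₂)
    (hr₁ : 1 ≤ r₁) (hrg₁ : r₁ ≤ g₁) (h : (1 - 1 / g₁) ^ 2 ≤ (f₀ - 1) * (f₂ - 1)) :
    (1 - 1 / r₁) ^ 2 ≤ (r₀ - 1) * (r₂ - 1) := by
  have hinv : 1 / g₁ ≤ 1 / r₁ := one_div_le_one_div_of_le (by linarith) hrg₁
  have hinv_le_one : 1 / r₁ ≤ 1 := div_le_one_of_le₀ hr₁ (by linarith)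
  calc (1 - 1 / r₁) ^ 2 ≤ (1 - 1 / g₁) ^ 2 := by gcongr
    _ ≤ (f₀ - 1) * (f₂ - 1) := h
    _ ≤ (r₀ - 1) * (r₂ - 1) := by gcongr; linarith

theorem stmt_11 (a f g : ℕ → ℝ) (hpos : ∀ n, 0 < a n) (N : ℕ)
    (hfg : ∀ n ≥ N, 1 < f n ∧ f n ≤ a n * a (n + 2) / (a (n + 1)) ^ 2 ∧
      a n * a (n + 2) / (a (n + 1)) ^ 2 ≤ g n)
    (h : ∀ n ≥ N, (f n - 1) * (f (n + 2) - 1) ≥ (1 - 1 / g (n + 1)) ^ 2) :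
    ∀ n ≥ N,
      (a n * a (n + 2) - (a (n + 1)) ^ 2) * (a (n + 2) * a (n + 4) - (a (n + 3)) ^ 2) ≥
        (a (n + 1) * a (n + 3) - (a (n + 2)) ^ 2) ^ 2 := by
  intro n hn
  obtain ⟨hf₀, hfr₀, -⟩ := hfg n hn
  obtain ⟨hf₁, hfr₁, hrg₁⟩ := hfg (n + 1) (by omega)
  obtain ⟨hf₂, hfr₂, -⟩ := hfg (n + 2) (by omega)
  exact sq_logConvexGap_le_of_ratio (fun m ↦ (hpos m).ne') <|
    one_sub_inv_sq_le_of_bounds hf₀.le hfr₀ hf₂.le hfr₂ (hf₁.le.trans hfr₁) hrg₁ (h n hn)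
end

section
/- The Motzkin numbers, defined by $M_0 = M_1 = 1$ and $(n+2)M_n = (2n+1)M_{n-1} + (3n-3)M_{n-2}$ for $n \ge 2$, satisfy $M_n M_{n+2} \ge M_{n+1}^2$ for all $n \ge 2$ (log-convexity from index 2). -/
/-!
Write `r k = M (k+1) / M k`. The recurrence gives
`(k+4) (r (k+1) - r k) · r k = -((k+4) r k ^ 2 - (2k+5) r k - (3k+3))`, and the quadratic on the
right takes the value `-9 (k-1) / (2k+7)^2 ≤ 0` at `u k = (6k+12)/(2k+7)`; being convex and
negative at `0`, it is `≤ 0` on `[0, u k]`, so `r k ≤ u k` already forces `r (k+1) ≥ r k`.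
The upper bound `r k ≤ u k` does not propagate on its own, but together with the lower bound
`r k ≥ (6k+3)/(2k+4)` it does for `k ≥ 2`, starting from `r 2 = 2`.
-/

/-- `(6k+3)/(2k+4) ≤ a (k+1) / a k ≤ (6k+12)/(2k+7)`, with denominators cleared. -/
def MotzkinRatioBounds (a : ℕ → ℕ) (k : ℕ) : Prop :=
  (6 * k + 3) * a k ≤ (2 * k + 4) * a (k + 1) ∧ (2 * k + 7) * a (k + 1) ≤ (6 * k + 12) * a k

theorem motzkin_recurrence_shift {M : ℕ → ℕ}
    (hrec : ∀ n : ℕ, 2 ≤ n →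
      (n + 2) * M n = (2 * n + 1) * M (n - 1) + (3 * n - 3) * M (n - 2)) (k : ℕ) :
    (k + 4) * M (k + 2) = (2 * k + 5) * M (k + 1) + (3 * k + 3) * M k := by
  have h := hrec (k + 2) (by omega)
  rw [show k + 2 - 1 = k + 1 by omega, Nat.add_sub_cancel,
    show 3 * (k + 2) - 3 = 3 * k + 3 by omega] at h
  linarith

section

variable {a : ℕ → ℕ}
  (ha : ∀ k, (k + 4) * a (k + 2) = (2 * k + 5) * a (k + 1) + (3 * k + 3) * a k)
include ha

theorem motzkin_ratio_le_succ {k : ℕ} (hk : 2 ≤ k)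
    (hlow : (6 * k + 3) * a k ≤ (2 * k + 4) * a (k + 1)) :
    (2 * k + 9) * a (k + 2) ≤ (6 * k + 18) * a (k + 1) := by
  refine le_of_mul_le_mul_left (a := (6 * k + 3) * (k + 4)) ?_ (by positivity)
  have := congrArg (· * ((6 * k + 3) * (2 * k + 9))) (ha k)
  linarith [Nat.mul_le_mul_left ((2 * k + 9) * (3 * k + 3)) hlow,
    Nat.mul_le_mul_right (a (k + 1)) hk]

theorem motzkin_le_ratio_succ {k : ℕ} (hup : (2 * k + 7) * a (k + 1) ≤ (6 * k + 12) * a k) :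
    (6 * k + 9) * a (k + 1) ≤ (2 * k + 6) * a (k + 2) := by
  refine le_of_mul_le_mul_left (a := (6 * k + 12) * (k + 4)) ?_ (by positivity)
  have := congrArg (· * ((2 * k + 6) * (6 * k + 12))) (ha k)
  linarith [Nat.mul_le_mul_left ((2 * k + 6) * (3 * k + 3)) hup, Nat.zero_le (k * a (k + 1))]

theorem motzkinRatioBounds_of_le {k₀ : ℕ} (hk₀ : 2 ≤ k₀)
    (hbase : MotzkinRatioBounds a k₀) :
    ∀ k, k₀ ≤ k → MotzkinRatioBounds a k := by
  intro k hk
  induction k, hk using Nat.le_induction with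
  | base => exact hbase
  | succ k hk ih =>
    exact ⟨motzkin_le_ratio_succ ha ih.2, motzkin_ratio_le_succ ha (hk₀.trans hk) ih.1⟩

theorem motzkin_sq_le_mul_of_ratio_le {k : ℕ} (hk : 1 ≤ k)
    (hup : (2 * k + 7) * a (k + 1) ≤ (6 * k + 12) * a k) :
    a (k + 1) ^ 2 ≤ a k * a (k + 2) := by
  refine le_of_mul_le_mul_left (a := (2 * k + 7) ^ 2 * (k + 4)) ?_ (by positivity)
  have := congrArg (· * ((2 * k + 7) ^ 2 * a k)) (ha k)
  linarith [Nat.mul_le_mul_left ((k + 4) * (2 * k + 7) * a (k + 1)) hup,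
    Nat.mul_le_mul_left ((2 * k * k + 12 * k + 13) * a k) hup,
    Nat.mul_le_mul_right (a k * a k) hk]

end

theorem stmt_12 (M : ℕ → ℕ) (hM0 : M 0 = 1) (hM1 : M 1 = 1)
    (hrec : ∀ n : ℕ, 2 ≤ n →
      (n + 2) * M n = (2 * n + 1) * M (n - 1) + (3 * n - 3) * M (n - 2)) :
    ∀ n : ℕ, 2 ≤ n → M n * M (n + 2) ≥ (M (n + 1)) ^ 2 := by
  have ha := motzkin_recurrence_shift hrec
  have hM2 : M 2 = 2 := by have := ha 0; norm_num [hM0, hM1] at this; omega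
  have hM3 : M 3 = 4 := by have := ha 1; norm_num [hM1, hM2] at this; omega
  have hbase : MotzkinRatioBounds M 2 := by simp [MotzkinRatioBounds, hM2, hM3]
  intro n hn
  exact motzkin_sq_le_mul_of_ratio_le ha (by omega)
    (motzkinRatioBounds_of_le ha le_rfl hbase n hn).2
end

section
/- Let $M_n$ be the Motzkin numbers ($M_0=M_1=1$, $(n+2)M_n=(2n+1)M_{n-1}+(3n-3)M_{n-2}$). The sequence $\{\mathscr{L}M_n\}_{n \ge 6}$ with $\mathscr{L}M_n = M_n M_{n+2} - M_{n+1}^2$ is log-convex, i.e., $(\mathscr{L}M_n)(\mathscr{L}M_{n+2}) \ge (\mathscr{L}M_{n+1})^2$ for all $n \ge 6$; moreover this inequality fails for some $n < 6$, so $\{M_n\}_{n\ge 0}$ is not 2-log-convex but $\{M_n\}_{n\ge 6}$ is. -/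
/-!
For `n ≥ 6` the ratio `M (n+1) / M n` lies between `ratioLo n / ratioDen n` and
`ratioHi n / ratioDen n`: directly for `n = 6, 7`, and by induction from there on, the induction
step being a linear inequality in `(M n, M (n+1))`.
By the recurrence, `ℒM n`, `ℒM (n+1)` and `ℒM (n+2)` are (after clearing denominators) quadratic
forms in `(M n, M (n+1))`, so `0 ≤ ℒM n` and the log-convexity of `ℒM` are the nonnegativity of a
quadratic and of a quartic form on the cone cut out by the ratio bounds. Writing a point of that
cone in terms of its two (nonnegative) slacks and `n` as `m + 6`, both forms become polynomials in
`m` and the slacks with nonnegative coefficients (as does the induction step, with `n = m + 7`).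
-/

/-- The 2×2 Hankel determinant, written `ℒa n` in the paper. -/
def hankelDet (a : ℕ → ℤ) (n : ℕ) : ℤ := a n * a (n + 2) - a (n + 1) ^ 2

/-- The points `(q * (u + v), hi * u + lo * v)` are the points of the cone `lo * A ≤ q * B ≤ hi * A`
with slacks `u` and `v`, scaled by `(hi - lo) * q`. The slacks are natural numbers so that `hpos`
can be closed by expanding and `positivity`. -/
theorem nonneg_of_nonneg_on_slacks {G : ℤ → ℤ → ℤ} {d : ℕ}
    (hG : ∀ t A B, G (t * A) (t * B) = t ^ d * G A B) {lo q hi A B : ℤ}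
    (hq : 0 < q) (hlt : lo < hi) (hlo : lo * A ≤ q * B) (hhi : q * B ≤ hi * A)
    (hpos : ∀ u v : ℕ, 0 ≤ G (q * (u + v)) (hi * u + lo * v)) : 0 ≤ G A B := by
  obtain ⟨u, hu⟩ := Int.eq_ofNat_of_zero_le (sub_nonneg.2 hlo)
  obtain ⟨v, hv⟩ := Int.eq_ofNat_of_zero_le (sub_nonneg.2 hhi)
  have key := hpos u v
  rw [← hu, ← hv, show q * (q * B - lo * A + (hi * A - q * B)) = (hi - lo) * q * A by ring,
    show hi * (q * B - lo * A) + lo * (hi * A - q * B) = (hi - lo) * q * B by ring, hG] at key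
  exact nonneg_of_mul_nonneg_right key (pow_pos (mul_pos (sub_pos.2 hlt) hq) d)

/- The quotients `ratioLo n / ratioDen n` and `ratioHi n / ratioDen n` agree with the asymptotics
`M (n+1) / M n = 3 - 9 / (2 n) + O(n⁻²)`. -/
def ratioDen (n : ℤ) : ℤ := 64 * n ^ 4 + 264 * n ^ 3 + 215 * n ^ 2

def ratioLo (n : ℤ) : ℤ := 192 * n ^ 4 + 504 * n ^ 3 + 285 * n ^ 2 - 144

def ratioHi (n : ℤ) : ℤ := 192 * n ^ 4 + 504 * n ^ 3 + 285 * n ^ 2 + 84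

def RatioBounds (n A B : ℤ) : Prop :=
  ratioLo n * A ≤ ratioDen n * B ∧ ratioDen n * B ≤ ratioHi n * A

theorem RatioBounds.nonneg {G : ℤ → ℤ → ℤ} {d : ℕ}
    (hG : ∀ t A B, G (t * A) (t * B) = t ^ d * G A B) {n : ℕ} (hn : 1 ≤ n) {A B : ℤ}
    (h : RatioBounds n A B)
    (hpos : ∀ u v : ℕ, 0 ≤ G (ratioDen n * (u + v)) (ratioHi n * u + ratioLo n * v)) :
    0 ≤ G A B := by
  obtain ⟨m, rfl⟩ := Nat.exists_eq_add_of_le' hn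
  refine nonneg_of_nonneg_on_slacks hG ?_ ?_ h.1 h.2 hpos
  · simp only [ratioDen]; positivity
  · simp only [ratioLo, ratioHi]; linarith

/-- `(n + 4) * M (n + 2)` in terms of `A = M n` and `B = M (n + 1)`. -/
def scaledM2 (n A B : ℤ) : ℤ := (3 * n + 3) * A + (2 * n + 5) * B

/-- `(n + 4) * (n + 5) * M (n + 3)` in terms of `A = M n` and `B = M (n + 1)`. -/
def scaledM3 (n A B : ℤ) : ℤ := (2 * n + 7) * scaledM2 n A B + (3 * n + 6) * (n + 4) * B

/-- `(n + 4) * (n + 5) * (n + 6) * M (n + 4)` in terms of `A = M n` and `B = M (n + 1)`. -/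
def scaledM4 (n A B : ℤ) : ℤ :=
  (2 * n + 9) * scaledM3 n A B + (3 * n + 9) * (n + 5) * scaledM2 n A B

/- `hankelForm0`, `hankelForm1`, `hankelForm2` at `(n, M n, M (n + 1))` are `ℒM n`, `ℒM (n + 1)`,
`ℒM (n + 2)` times `n + 4`, `(n + 4)² (n + 5)`, `(n + 4)² (n + 5)² (n + 6)`. -/
def hankelForm0 (n A B : ℤ) : ℤ := A * scaledM2 n A B - (n + 4) * B ^ 2

def hankelForm1 (n A B : ℤ) : ℤ := (n + 4) * B * scaledM3 n A B - (n + 5) * scaledM2 n A B ^ 2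

def hankelForm2 (n A B : ℤ) : ℤ :=
  (n + 5) * scaledM2 n A B * scaledM4 n A B - (n + 6) * scaledM3 n A B ^ 2

def logConvexityForm (n A B : ℤ) : ℤ :=
  (n + 4) * hankelForm0 n A B * hankelForm2 n A B - (n + 6) * hankelForm1 n A B ^ 2

theorem ratioBounds_succ {n : ℕ} (hn : 7 ≤ n) {A B C : ℤ} (h : RatioBounds n A B)
    (hC : ((n : ℤ) + 4) * C = scaledM2 n A B) : RatioBounds (n + 1 : ℕ) B C := by
  have hn4 : (0 : ℤ) < n + 4 := by positivity
  have hlo : 0 ≤ ratioDen (n + 1 : ℕ) * scaledM2 n A B - (n + 4) * ratioLo (n + 1 : ℕ) * B := by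
    refine h.nonneg (G := fun A B ↦ ratioDen (n + 1 : ℕ) * scaledM2 n A B
      - (n + 4) * ratioLo (n + 1 : ℕ) * B) (d := 1) (by intros; simp only [scaledM2]; ring)
      (by omega) fun u v ↦ ?_
    obtain ⟨m, rfl⟩ := Nat.exists_eq_add_of_le' hn
    simp only [scaledM2, ratioDen, ratioLo, ratioHi]
    push_cast
    ring_nf
    positivity
  have hhi : 0 ≤ (n + 4) * ratioHi (n + 1 : ℕ) * B - ratioDen (n + 1 : ℕ) * scaledM2 n A B := by
    refine h.nonneg (G := fun A B ↦ (n + 4) * ratioHi (n + 1 : ℕ) * B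
      - ratioDen (n + 1 : ℕ) * scaledM2 n A B) (d := 1) (by intros; simp only [scaledM2]; ring)
      (by omega) fun u v ↦ ?_
    obtain ⟨m, rfl⟩ := Nat.exists_eq_add_of_le' hn
    simp only [scaledM2, ratioDen, ratioLo, ratioHi]
    push_cast
    ring_nf
    positivity
  rw [← hC] at hlo hhi
  constructor <;> nlinarith

theorem hankelForm0_nonneg {n : ℕ} (hn : 6 ≤ n) {A B : ℤ} (h : RatioBounds n A B) :
    0 ≤ hankelForm0 n A B := by
  refine h.nonneg (d := 2)
    (by intros; simp only [hankelForm0, scaledM2]; ring) (by omega) fun u v ↦ ?_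
  obtain ⟨m, rfl⟩ := Nat.exists_eq_add_of_le' hn
  simp only [hankelForm0, scaledM2, ratioDen, ratioHi, ratioLo]
  push_cast
  ring_nf
  positivity

theorem logConvexityForm_nonneg {n : ℕ} (hn : 6 ≤ n) {A B : ℤ} (h : RatioBounds n A B) :
    0 ≤ logConvexityForm n A B := by
  refine h.nonneg (d := 4) (by
      intros
      simp only [logConvexityForm, hankelForm0, hankelForm1, hankelForm2, scaledM2, scaledM3,
        scaledM4]
      ring) (by omega) fun u v ↦ ?_
  obtain ⟨m, rfl⟩ := Nat.exists_eq_add_of_le' hn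
  simp only [logConvexityForm, hankelForm0, hankelForm1, hankelForm2, scaledM2, scaledM3,
    scaledM4, ratioDen, ratioHi, ratioLo]
  push_cast
  ring_nf
  positivity

/-- The Motzkin recurrence, shifted so that no natural subtraction occurs. -/
def MotzkinRec (M : ℕ → ℤ) : Prop :=
  ∀ k : ℕ, ((k : ℤ) + 4) * M (k + 2) = (2 * k + 5) * M (k + 1) + (3 * k + 3) * M k

namespace MotzkinRec

variable {M : ℕ → ℤ}

theorem of_rec
    (hrec : ∀ n : ℕ, 2 ≤ n →
      ((n : ℤ) + 2) * M n = (2 * (n : ℤ) + 1) * M (n - 1) + (3 * (n : ℤ) - 3) * M (n - 2)) :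
    MotzkinRec M := by
  intro k
  have h := hrec (k + 2) (by omega)
  rw [show k + 2 - 1 = k + 1 by omega, show k + 2 - 2 = k by omega] at h
  push_cast at h
  linear_combination h

theorem apply_add_two_eq (hM : MotzkinRec M) {k : ℕ} {a b c : ℤ} (ha : M k = a)
    (hb : M (k + 1) = b) (hc : ((k : ℤ) + 4) * c = (2 * k + 5) * b + (3 * k + 3) * a) :
    M (k + 2) = c := by
  have := hM k
  rw [ha, hb, ← hc] at this
  exact mul_left_cancel₀ (by positivity) this

theorem eq_scaledM2 (hM : MotzkinRec M) (n : ℕ) :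
    ((n : ℤ) + 4) * M (n + 2) = scaledM2 n (M n) (M (n + 1)) := by
  rw [hM n, scaledM2]; ring

theorem eq_scaledM3 (hM : MotzkinRec M) (n : ℕ) :
    ((n : ℤ) + 4) * (n + 5) * M (n + 3) = scaledM3 n (M n) (M (n + 1)) := by
  have h := hM (n + 1)
  push_cast at h
  rw [scaledM3, ← hM.eq_scaledM2]
  linear_combination (↑n + 4) * h

theorem eq_scaledM4 (hM : MotzkinRec M) (n : ℕ) :
    ((n : ℤ) + 4) * (n + 5) * (n + 6) * M (n + 4) = scaledM4 n (M n) (M (n + 1)) := by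
  have h := hM (n + 2)
  push_cast at h
  rw [scaledM4, ← hM.eq_scaledM2, ← hM.eq_scaledM3]
  linear_combination (↑n + 4) * (↑n + 5) * h

theorem ratioBounds (hM : MotzkinRec M) (h7 : RatioBounds 7 (M 7) (M 8)) {n : ℕ} (hn : 7 ≤ n) :
    RatioBounds n (M n) (M (n + 1)) := by
  induction n, hn using Nat.le_induction with
  | base => exact h7
  | succ n hn ih => exact ratioBounds_succ hn ih (hM.eq_scaledM2 n)

theorem hankelDet_nonneg (hM : MotzkinRec M) {n : ℕ} (hn : 6 ≤ n)
    (h : RatioBounds n (M n) (M (n + 1))) : 0 ≤ hankelDet M n := by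
  have key : ((n : ℤ) + 4) * hankelDet M n = hankelForm0 n (M n) (M (n + 1)) := by
    rw [hankelDet, hankelForm0, ← hM.eq_scaledM2]; ring
  have := hankelForm0_nonneg hn h
  rw [← key] at this
  exact nonneg_of_mul_nonneg_right this (by positivity)

theorem hankelDet_sq_le (hM : MotzkinRec M) {n : ℕ} (hn : 6 ≤ n)
    (h : RatioBounds n (M n) (M (n + 1))) :
    hankelDet M (n + 1) ^ 2 ≤ hankelDet M n * hankelDet M (n + 2) := by
  have key : ((n : ℤ) + 4) ^ 4 * (n + 5) ^ 2 * (n + 6) *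
      (hankelDet M n * hankelDet M (n + 2) - hankelDet M (n + 1) ^ 2) =
      logConvexityForm n (M n) (M (n + 1)) := by
    rw [logConvexityForm, hankelForm0, hankelForm1, hankelForm2, ← hM.eq_scaledM2,
      ← hM.eq_scaledM3, ← hM.eq_scaledM4]
    simp only [hankelDet]
    ring
  have := logConvexityForm_nonneg hn h
  rw [← key] at this
  exact sub_nonneg.1 (nonneg_of_mul_nonneg_right this (by positivity))

end MotzkinRec

theorem stmt_13 (M : ℕ → ℤ) (hM0 : M 0 = 1) (hM1 : M 1 = 1)
    (hrec : ∀ n : ℕ, 2 ≤ n →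
      ((n : ℤ) + 2) * M n = (2 * (n : ℤ) + 1) * M (n - 1) + (3 * (n : ℤ) - 3) * M (n - 2))
    (L : ℕ → ℤ) (hL : ∀ n, L n = M n * M (n + 2) - (M (n + 1)) ^ 2) :
    (∀ n : ℕ, 6 ≤ n → 0 ≤ L n ∧ L n * L (n + 2) ≥ (L (n + 1)) ^ 2) ∧
    (∃ n : ℕ, n < 6 ∧ L n * L (n + 2) < (L (n + 1)) ^ 2) := by
  have hM := MotzkinRec.of_rec hrec
  obtain rfl : L = hankelDet M := funext hL
  have m2 : M 2 = 2 := hM.apply_add_two_eq hM0 hM1 (by norm_num)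
  have m3 : M 3 = 4 := hM.apply_add_two_eq hM1 m2 (by norm_num)
  have m4 : M 4 = 9 := hM.apply_add_two_eq m2 m3 (by norm_num)
  have m5 : M 5 = 21 := hM.apply_add_two_eq m3 m4 (by norm_num)
  have m6 : M 6 = 51 := hM.apply_add_two_eq m4 m5 (by norm_num)
  have m7 : M 7 = 127 := hM.apply_add_two_eq m5 m6 (by norm_num)
  have m8 : M 8 = 323 := hM.apply_add_two_eq m6 m7 (by norm_num)
  have bounds : ∀ n : ℕ, 6 ≤ n → RatioBounds n (M n) (M (n + 1)) := by
    intro n hn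
    rcases hn.eq_or_lt with rfl | hn
    · norm_num [RatioBounds, ratioLo, ratioDen, ratioHi, m6, m7]
    · exact hM.ratioBounds (by norm_num [RatioBounds, ratioLo, ratioDen, ratioHi, m7, m8]) hn
  refine ⟨fun n hn ↦ ⟨hM.hankelDet_nonneg hn (bounds n hn),
    hM.hankelDet_sq_le hn (bounds n hn)⟩, 1, by norm_num, ?_⟩
  norm_num [hankelDet, hM1, m2, m3, m4, m5]
end

section
/- Let $M_n$ denote the Motzkin numbers. Then $\lim_{n\to\infty} n^2\left(\frac{M_n M_{n+2}}{M_{n+1}^2} - 1\right) = \frac{3}{2}$. -/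
/-!
The ratios `tₙ = Mₙ₊₁ / Mₙ` satisfy `tₙ₊₁ = ((2n + 5) tₙ + 3n + 3) / ((n + 4) tₙ)`. Induction gives
`3 - 18 / (n + 7) ≤ tₙ ≤ 3`, so `tₙ → 3`. Once `tₙ ≥ 8 / 3` this recurrence contracts by the factor
`27 / 64`, and `g(n) = 3 - 9 / (2n) + 207 / (16n²)` satisfies it up to a defect `O(n⁻³)`, so
`tₙ = g(n) + O(n⁻³)`. Hence `n² (tₙ₊₁ - tₙ) → 9 / 2`, and `Mₙ Mₙ₊₂ / Mₙ₊₁² - 1 = (tₙ₊₁ - tₙ) / tₙ`.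
-/

open Filter Topology

namespace MotzkinRatio

-- The coefficient `207 / 16` is the one for which `approx` solves the recurrence up to `O(x⁻³)`.
noncomputable def approx (x : ℝ) : ℝ := 3 - 9 / (2 * x) + 207 / (16 * x ^ 2)

noncomputable def ratioMap (x s : ℝ) : ℝ := (2 * x + 5) / (x + 4) + (3 * x + 3) / ((x + 4) * s)

lemma approx_eq {x : ℝ} (hx : x ≠ 0) : approx x = (48 * x ^ 2 - 72 * x + 207) / (16 * x ^ 2) := by
  rw [approx]; field_simp; ring

lemma eight_thirds_le_approx {x : ℝ} (hx : 10 ≤ x) : 8 / 3 ≤ approx x := by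
  rw [approx_eq (by positivity), le_div_iff₀ (by positivity)]; nlinarith

lemma ratioMap_sub_ratioMap {x s s' : ℝ} (hx : x + 4 ≠ 0) (hs : s ≠ 0) (hs' : s' ≠ 0) :
    ratioMap x s - ratioMap x s' = (3 * x + 3) / ((x + 4) * s * s') * (s' - s) := by
  simp only [ratioMap]; field_simp; ring

lemma abs_ratioMap_sub_le {x s s' : ℝ} (hx : 0 ≤ x) (hs : 8 / 3 ≤ s) (hs' : 8 / 3 ≤ s') :
    |ratioMap x s - ratioMap x s'| ≤ 27 / 64 * |s - s'| := by
  have hss' : 64 / 9 ≤ s * s' := by nlinarith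
  have hfactor : (3 * x + 3) / ((x + 4) * s * s') ≤ 27 / 64 := by
    rw [div_le_iff₀ (by positivity)]; nlinarith
  rw [ratioMap_sub_ratioMap (by positivity) (by positivity) (by positivity), abs_mul,
    abs_of_pos (by positivity), abs_sub_comm]
  exact mul_le_mul_of_nonneg_right hfactor (abs_nonneg _)

lemma ratioMap_approx_sub_approx {x : ℝ} (hx : 0 < x) :
    ratioMap x (approx x) - approx (x + 1) = (-39168 * x ^ 2 + 28935 * x - 134964) /
      (16 * (x + 1) ^ 2 * (x + 4) * (48 * x ^ 2 - 72 * x + 207)) := by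
  have hq : 48 * x ^ 2 - 72 * x + 207 ≠ 0 := by nlinarith [sq_nonneg (x - 1)]
  rw [ratioMap, approx_eq hx.ne', approx_eq (by positivity)]
  generalize hA : 48 * x ^ 2 - 72 * x + 207 = A at *
  field_simp
  subst hA
  ring

lemma abs_ratioMap_approx_sub_approx_le {x : ℝ} (hx : 50 ≤ x) :
    |ratioMap x (approx x) - approx (x + 1)| ≤ 52 / x ^ 3 := by
  have hq : 0 < 48 * x ^ 2 - 72 * x + 207 := by nlinarith [sq_nonneg (x - 1)]
  have hnum : -39168 * x ^ 2 + 28935 * x - 134964 < 0 := by nlinarith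
  have hden : 0 < 16 * (x + 1) ^ 2 * (x + 4) * (48 * x ^ 2 - 72 * x + 207) := by positivity
  rw [ratioMap_approx_sub_approx (by positivity), abs_div, abs_of_pos hden, abs_of_neg hnum,
    div_le_div_iff₀ (by positivity) (by positivity)]
  have hy : 0 ≤ x - 50 := by linarith
  nlinarith [pow_nonneg hy 2, pow_nonneg hy 3, pow_nonneg hy 4]

lemma abs_ratioMap_sub_approx_le {x s : ℝ} (hx : 50 ≤ x) (hs : 8 / 3 ≤ s)
    (h : |s - approx x| ≤ 102400 / x ^ 3) :
    |ratioMap x s - approx (x + 1)| ≤ 102400 / (x + 1) ^ 3 := by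
  have hx0 : 0 < x := by linarith
  calc |ratioMap x s - approx (x + 1)|
      ≤ |ratioMap x s - ratioMap x (approx x)| + |ratioMap x (approx x) - approx (x + 1)| :=
        abs_sub_le _ _ _
    _ ≤ 27 / 64 * (102400 / x ^ 3) + 52 / x ^ 3 := by
        gcongr
        · exact (abs_ratioMap_sub_le hx0.le hs (eight_thirds_le_approx (by linarith))).trans
            (by gcongr)
        · exact abs_ratioMap_approx_sub_approx_le hx
    _ = 43252 / x ^ 3 := by ring
    _ ≤ 102400 / (x + 1) ^ 3 := by
        rw [div_le_div_iff₀ (by positivity) (by positivity)]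
        nlinarith [pow_nonneg hx0.le 2, pow_nonneg hx0.le 3]

lemma tendsto_sq_mul_sub_of_abs_le {e : ℕ → ℝ} {C : ℝ} {N : ℕ} (hC : 0 ≤ C)
    (he : ∀ n ≥ N, |e n| ≤ C / (n : ℝ) ^ 3) :
    Tendsto (fun n : ℕ => (n : ℝ) ^ 2 * (e (n + 1) - e n)) atTop (𝓝 0) := by
  refine squeeze_zero_norm' ?_ (tendsto_const_div_atTop_nhds_zero_nat (2 * C))
  filter_upwards [eventually_ge_atTop (max N 1)] with n hn
  have hn0 : (0 : ℝ) < n := by exact_mod_cast (le_of_max_le_right hn)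
  have hsucc : |e (n + 1)| ≤ C / (n : ℝ) ^ 3 := by
    refine (he (n + 1) (by omega)).trans ?_
    push_cast
    gcongr
    linarith
  calc ‖(n : ℝ) ^ 2 * (e (n + 1) - e n)‖ = (n : ℝ) ^ 2 * |e (n + 1) - e n| := by
        rw [Real.norm_eq_abs, abs_mul, abs_of_nonneg (by positivity)]
    _ ≤ (n : ℝ) ^ 2 * (C / (n : ℝ) ^ 3 + C / (n : ℝ) ^ 3) := by
        gcongr
        exact (abs_sub _ _).trans (add_le_add hsucc (he n (le_of_max_le_left hn)))
    _ = 2 * C / n := by field_simp; ring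

lemma tendsto_sq_mul_approx_sub :
    Tendsto (fun n : ℕ => (n : ℝ) ^ 2 * (approx ((n : ℝ) + 1) - approx n)) atTop (𝓝 (9 / 2)) := by
  let φ : ℝ → ℝ := fun u => 9 / 2 * (1 - u) + 207 / 16 * ((1 - u) ^ 2 - 1)
  have hφ : Tendsto φ (𝓝 0) (𝓝 (9 / 2)) := by
    simpa [φ] using (show Continuous φ by fun_prop).tendsto 0
  refine (hφ.comp tendsto_one_div_add_atTop_nhds_zero_nat).congr' ?_
  filter_upwards [eventually_ne_atTop 0] with n hn
  have hn0 : (n : ℝ) ≠ 0 := Nat.cast_ne_zero.2 hn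
  simp only [Function.comp, φ, approx]
  field_simp
  ring

section RatioSequence

variable {t : ℕ → ℝ}

lemma three_sub_le_and_le_three (ht0 : t 0 = 1) (ht : ∀ m : ℕ, t (m + 1) = ratioMap m (t m))
    (m : ℕ) : 3 - 18 / ((m : ℝ) + 7) ≤ t m ∧ t m ≤ 3 := by
  induction m with
  | zero => norm_num [ht0]
  | succ n ih =>
    obtain ⟨hlb, hub⟩ := ih
    have hlb' : 3 * ((n : ℝ) + 1) ≤ ((n : ℝ) + 7) * t n := by
      have h : 3 - 18 / ((n : ℝ) + 7) = 3 * ((n : ℝ) + 1) / ((n : ℝ) + 7) := by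
        field_simp; ring
      rw [h, div_le_iff₀ (by positivity)] at hlb; linarith
    have hpos : 0 < t n := by nlinarith
    rw [ht n, ratioMap]
    push_cast
    constructor
    · rw [div_add_div _ _ (by positivity) (by positivity), le_div_iff₀ (by positivity)]
      have h : 3 - 18 / ((n : ℝ) + 1 + 7) = 3 * ((n : ℝ) + 2) / ((n : ℝ) + 8) := by
        field_simp; ring
      rw [h, div_mul_eq_mul_div, div_le_iff₀ (by positivity)]
      nlinarith [mul_nonneg (sub_nonneg.2 hub) (sq_nonneg (n : ℝ))]
    · rw [div_add_div _ _ (by positivity) (by positivity), div_le_iff₀ (by positivity)]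
      nlinarith

lemma abs_sub_approx_le (ht0 : t 0 = 1) (ht : ∀ m : ℕ, t (m + 1) = ratioMap m (t m))
    {n : ℕ} (hn : 50 ≤ n) : |t n - approx n| ≤ 102400 / (n : ℝ) ^ 3 := by
  -- From `n = 50` on, the crude bounds give `t n ≥ 8 / 3`, and at `n = 50` they give the base case.
  induction n, hn using Nat.le_induction with
  | base =>
    obtain ⟨hlb, hub⟩ := three_sub_le_and_le_three ht0 ht 50
    rw [abs_le, approx]
    norm_num at hlb ⊢
    constructor <;> linarith
  | succ n hn ih =>
    have hx : (50 : ℝ) ≤ n := by exact_mod_cast hn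
    have hlb : 8 / 3 ≤ t n := by
      refine le_trans ?_ (three_sub_le_and_le_three ht0 ht n).1
      rw [le_sub_comm, div_le_iff₀ (by positivity)]
      linarith
    rw [ht n]
    push_cast
    exact abs_ratioMap_sub_approx_le hx hlb ih

lemma tendsto_three (ht0 : t 0 = 1) (ht : ∀ m : ℕ, t (m + 1) = ratioMap m (t m)) :
    Tendsto t atTop (𝓝 3) := by
  have h : Tendsto (fun n : ℕ => 3 - 18 / ((n : ℝ) + 7)) atTop (𝓝 3) := by
    have h18 : Tendsto (fun n : ℕ => 18 / ((n : ℝ) + 7)) atTop (𝓝 0) := by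
      simpa using
        (tendsto_add_atTop_iff_nat 7).2 (tendsto_const_div_atTop_nhds_zero_nat (18 : ℝ))
    simpa using tendsto_const_nhds.sub h18
  exact tendsto_of_tendsto_of_tendsto_of_le_of_le h tendsto_const_nhds
    (fun n => (three_sub_le_and_le_three ht0 ht n).1)
    (fun n => (three_sub_le_and_le_three ht0 ht n).2)

lemma tendsto_sq_mul_sub (ht0 : t 0 = 1) (ht : ∀ m : ℕ, t (m + 1) = ratioMap m (t m)) :
    Tendsto (fun n : ℕ => (n : ℝ) ^ 2 * (t (n + 1) - t n)) atTop (𝓝 (9 / 2)) := by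
  have herr := tendsto_sq_mul_sub_of_abs_le (e := fun n => t n - approx n) (by norm_num)
    fun n hn => abs_sub_approx_le ht0 ht hn
  rw [← add_zero (9 / 2 : ℝ)]
  exact (tendsto_sq_mul_approx_sub.add herr).congr fun n => by push_cast; ring

end RatioSequence

section NatRecurrence

variable {M : ℕ → ℕ}

lemma rec_add_two (hrec : ∀ n : ℕ, 2 ≤ n →
      (n + 2) * M n = (2 * n + 1) * M (n - 1) + (3 * n - 3) * M (n - 2)) (m : ℕ) :
    (m + 4) * M (m + 2) = (2 * m + 5) * M (m + 1) + (3 * m + 3) * M m := by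
  have h := hrec (m + 2) (by omega)
  rwa [show 3 * (m + 2) - 3 = 3 * m + 3 by omega, show 2 * (m + 2) + 1 = 2 * m + 5 by ring] at h

lemma pos_of_rec (h0 : 0 < M 0) (h1 : 0 < M 1)
    (hrec : ∀ m : ℕ, (m + 4) * M (m + 2) = (2 * m + 5) * M (m + 1) + (3 * m + 3) * M m) (n : ℕ) :
    0 < M n := by
  induction n using Nat.twoStepInduction with
  | zero => exact h0
  | one => exact h1
  | more m _ ih =>
    have h : 0 < (m + 4) * M (m + 2) := by rw [hrec m]; positivity
    exact Nat.pos_of_mul_pos_left h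

lemma ratio_succ_eq_ratioMap (hpos : ∀ n, 0 < M n)
    (hrec : ∀ m : ℕ, (m + 4) * M (m + 2) = (2 * m + 5) * M (m + 1) + (3 * m + 3) * M m) (m : ℕ) :
    (M (m + 2) : ℝ) / M (m + 1) = ratioMap m (M (m + 1) / M m) := by
  have hm : (M m : ℝ) ≠ 0 := by exact_mod_cast (hpos m).ne'
  have hm1 : (M (m + 1) : ℝ) ≠ 0 := by exact_mod_cast (hpos (m + 1)).ne'
  have h : ((m : ℝ) + 4) * M (m + 2) = (2 * m + 5) * M (m + 1) + (3 * m + 3) * M m := by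
    exact_mod_cast hrec m
  rw [ratioMap, div_eq_iff hm1]
  field_simp
  linear_combination h

end NatRecurrence

end MotzkinRatio

open MotzkinRatio

theorem stmt_15 (M : ℕ → ℕ) (hM0 : M 0 = 1) (hM1 : M 1 = 1)
    (hrec : ∀ n : ℕ, 2 ≤ n →
      (n + 2) * M n = (2 * n + 1) * M (n - 1) + (3 * n - 3) * M (n - 2)) :
    Filter.Tendsto
      (fun n : ℕ => (n : ℝ) ^ 2 * ((M n : ℝ) * (M (n + 2) : ℝ) / ((M (n + 1) : ℝ)) ^ 2 - 1))
      Filter.atTop (nhds (3 / 2)) := by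
  have hrec' := rec_add_two hrec
  have hpos := pos_of_rec (by omega) (by omega) hrec'
  set t : ℕ → ℝ := fun n => M (n + 1) / M n
  have ht0 : t 0 = 1 := by simp [t, hM0, hM1]
  have ht (m : ℕ) : t (m + 1) = ratioMap m (t m) := ratio_succ_eq_ratioMap hpos hrec' m
  have hlim := (tendsto_sq_mul_sub ht0 ht).div (tendsto_three ht0 ht) three_ne_zero
  norm_num at hlim
  refine hlim.congr fun n => ?_
  have hm : (M n : ℝ) ≠ 0 := by exact_mod_cast (hpos n).ne'
  have hm1 : (M (n + 1) : ℝ) ≠ 0 := by exact_mod_cast (hpos (n + 1)).ne'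
  simp only [Pi.div_apply, t]
  field_simp
end

section
/- Let $\{a_n\}$ be a positive sequence and suppose for some $N$ and all $n \ge N$: $\frac{3}{4}n^3+\frac{3}{2}n^2+\frac{25}{12}n+\frac{19}{9} \le \frac{a_{n+1}}{a_n} \le \frac{3}{4}n^3+\frac{3}{2}n^2+\frac{25}{12}n+\frac{37}{9}$. Then for all $n \ge \max(N, 8)$, $1 + \frac{3}{n} \le \frac{a_n a_{n+2}}{a_{n+1}^2} \le 1 + \frac{3}{n} + \frac{2}{n^2}$, and consequently $\{a_n\}_{n \ge \max(N,8)}$ is 2-log-convex. -/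
/-!
Write `c n = a n * a (n + 2) / a (n + 1) ^ 2`; it is the quotient of consecutive ratios
`a (n + 2) / a (n + 1)` and `a (n + 1) / a n`, so the cubic bounds on these ratios pin `c n`
between `1 + 3 / n` and `1 + 3 / n + 2 / n ^ 2` once `n ≥ 8`. In terms of `c`, the second
log-convexity inequality at `n` reads `(c (n+1) - 1) ^ 2 ≤ c (n+1) ^ 2 (c n - 1) (c (n+2) - 1)`,
and the bounds on `c` make the right side at least `9 c (n+1) ^ 2 / (n (n + 2))`, which beats the
left side because `c (n+1) - 1 ≤ (3m + 2) / m ^ 2` with `m = n + 1`.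
-/

noncomputable def cubicBound (c y : ℝ) : ℝ := 3 / 4 * y ^ 3 + 3 / 2 * y ^ 2 + 25 / 12 * y + c

noncomputable def logConvexityRatio (a : ℕ → ℝ) (n : ℕ) : ℝ :=
  a n * a (n + 2) / a (n + 1) ^ 2

lemma div_bounds_of_cubicBound {y p q : ℝ} (hy : 8 ≤ y)
    (hp_lo : cubicBound (19 / 9) y ≤ p) (hp_hi : p ≤ cubicBound (37 / 9) y)
    (hq_lo : cubicBound (19 / 9) (y + 1) ≤ q) (hq_hi : q ≤ cubicBound (37 / 9) (y + 1)) :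
    1 + 3 / y ≤ q / p ∧ q / p ≤ 1 + 3 / y + 2 / y ^ 2 := by
  unfold cubicBound at *
  have hy0 : 0 < y := by linarith
  have hp : 0 < p := by nlinarith
  constructor
  · rw [show 1 + 3 / y = (y + 3) / y by field_simp, div_le_div_iff₀ hy0 hp]
    nlinarith
  · rw [show 1 + 3 / y + 2 / y ^ 2 = (y + 1) * (y + 2) / y ^ 2 by field_simp; ring,
      div_le_div_iff₀ hp (by positivity)]
    nlinarith

lemma logConvexityRatio_bounds (a : ℕ → ℝ) (hpos : ∀ n, 0 < a n) {N : ℕ}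
    (h : ∀ n ≥ N, cubicBound (19 / 9) n ≤ a (n + 1) / a n ∧
      a (n + 1) / a n ≤ cubicBound (37 / 9) n)
    {n : ℕ} (hN : N ≤ n) (h8 : 8 ≤ n) :
    1 + 3 / (n : ℝ) ≤ logConvexityRatio a n ∧
      logConvexityRatio a n ≤ 1 + 3 / (n : ℝ) + 2 / (n : ℝ) ^ 2 := by
  have hquot : logConvexityRatio a n = (a (n + 2) / a (n + 1)) / (a (n + 1) / a n) := by
    have := (hpos n).ne'
    have := (hpos (n + 1)).ne'
    unfold logConvexityRatio
    field_simp
  obtain ⟨h0_lo, h0_hi⟩ := h n hN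
  obtain ⟨h1_lo, h1_hi⟩ := h (n + 1) (by omega)
  rw [Nat.cast_succ] at h1_lo h1_hi
  rw [hquot]
  exact div_bounds_of_cubicBound (by exact_mod_cast h8) h0_lo h0_hi h1_lo h1_hi

lemma sq_sub_le_mul_sub_iff (a : ℕ → ℝ) (hpos : ∀ n, 0 < a n) (n : ℕ) :
    (a (n + 1) * a (n + 3) - a (n + 2) ^ 2) ^ 2 ≤
        (a n * a (n + 2) - a (n + 1) ^ 2) * (a (n + 2) * a (n + 4) - a (n + 3) ^ 2) ↔
      (logConvexityRatio a (n + 1) - 1) ^ 2 ≤ logConvexityRatio a (n + 1) ^ 2 *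
        ((logConvexityRatio a n - 1) * (logConvexityRatio a (n + 2) - 1)) := by
  have h1 := (hpos (n + 1)).ne'
  have h2 := (hpos (n + 2)).ne'
  have h3 := (hpos (n + 3)).ne'
  have hlhs : (a (n + 1) * a (n + 3) - a (n + 2) ^ 2) ^ 2 =
      a (n + 2) ^ 4 * (logConvexityRatio a (n + 1) - 1) ^ 2 := by
    unfold logConvexityRatio
    field_simp
  have hrhs : (a n * a (n + 2) - a (n + 1) ^ 2) * (a (n + 2) * a (n + 4) - a (n + 3) ^ 2) =
      a (n + 2) ^ 4 * (logConvexityRatio a (n + 1) ^ 2 *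
        ((logConvexityRatio a n - 1) * (logConvexityRatio a (n + 2) - 1))) := by
    unfold logConvexityRatio
    field_simp
  rw [hlhs, hrhs, mul_le_mul_iff_right₀ (by have := hpos (n + 2); positivity)]

lemma sq_sub_one_le_of_bounds {x u v w : ℝ} (hx : 0 < x) (hu : 1 + 3 / x ≤ u) (hv_lo : 1 ≤ v)
    (hv_hi : v ≤ 1 + 3 / (x + 1) + 2 / (x + 1) ^ 2) (hw : 1 + 3 / (x + 2) ≤ w) :
    (v - 1) ^ 2 ≤ v ^ 2 * ((u - 1) * (w - 1)) := by
  set m := x + 1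
  set t := v - 1
  have ht0 : 0 ≤ t := by linarith
  have hm0 : 0 < m := by linarith
  have ht_hi : m ^ 2 * t ≤ 3 * m + 2 := by
    have : t ≤ (3 * m + 2) / m ^ 2 := by
      calc t ≤ 3 / m + 2 / m ^ 2 := by linarith
        _ = (3 * m + 2) / m ^ 2 := by field_simp
    rwa [le_div_iff₀ (by positivity), mul_comm] at this
  -- `(m - 3) t ≤ 3`, as `m ^ 2 (m - 3) t ≤ (m - 3) (3m + 2) ≤ 3 m ^ 2`
  have hmt : m * t ≤ 3 * v := by nlinarith
  have hsq : x * (x + 2) * t ^ 2 ≤ 9 * v ^ 2 := by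
    have : x * (x + 2) ≤ m ^ 2 := by nlinarith
    nlinarith [mul_self_le_mul_self (mul_nonneg hm0.le ht0) hmt]
  have hprod : 9 / (x * (x + 2)) ≤ (u - 1) * (w - 1) := by
    calc 9 / (x * (x + 2)) = 3 / x * (3 / (x + 2)) := by field_simp; ring
      _ ≤ (u - 1) * (w - 1) := by
        have : 0 < 3 / x := by positivity
        apply mul_le_mul <;> first | linarith | positivity
  calc t ^ 2 ≤ v ^ 2 * (9 / (x * (x + 2))) := by
        rw [mul_div_assoc', le_div_iff₀ (by positivity)]; linarith
    _ ≤ v ^ 2 * ((u - 1) * (w - 1)) := by gcongr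

theorem stmt_18 (a : ℕ → ℝ) (hpos : ∀ n, 0 < a n) (N : ℕ)
    (h : ∀ n ≥ N,
      3 / 4 * (n : ℝ) ^ 3 + 3 / 2 * (n : ℝ) ^ 2 + 25 / 12 * n + 19 / 9 ≤ a (n + 1) / a n ∧
      a (n + 1) / a n ≤ 3 / 4 * (n : ℝ) ^ 3 + 3 / 2 * (n : ℝ) ^ 2 + 25 / 12 * n + 37 / 9) :
    ∀ n ≥ max N 8,
      (1 + 3 / (n : ℝ) ≤ a n * a (n + 2) / (a (n + 1)) ^ 2 ∧
        a n * a (n + 2) / (a (n + 1)) ^ 2 ≤ 1 + 3 / (n : ℝ) + 2 / (n : ℝ) ^ 2) ∧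
      a n * a (n + 2) ≥ (a (n + 1)) ^ 2 ∧
      (a n * a (n + 2) - (a (n + 1)) ^ 2) * (a (n + 2) * a (n + 4) - (a (n + 3)) ^ 2) ≥
        (a (n + 1) * a (n + 3) - (a (n + 2)) ^ 2) ^ 2 := by
  intro n hn
  have hc (k : ℕ) (hk : n ≤ k) := logConvexityRatio_bounds a hpos h
    (le_trans (le_of_max_le_left hn) hk) (le_trans (le_of_max_le_right hn) hk)
  have hc0 := hc n le_rfl
  have hc1 := hc (n + 1) (by omega)
  have hc2 := hc (n + 2) (by omega)
  push_cast at hc1 hc2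
  have hn0 : (0 : ℝ) < n := Nat.cast_pos.mpr (by omega)
  have hc0_one : 1 ≤ logConvexityRatio a n :=
    le_trans (le_add_of_nonneg_right (by positivity)) hc0.1
  refine ⟨hc0, (one_le_div (pow_pos (hpos _) 2)).mp hc0_one, ?_⟩
  refine (sq_sub_le_mul_sub_iff a hpos n).mpr (sq_sub_one_le_of_bounds hn0 hc0.1 ?_ hc1.2 ?_)
  · exact le_trans (le_add_of_nonneg_right (by positivity)) hc1.1
  · exact hc2.1
end

section
/- Let $c_1 > 0$, $\alpha > 0$, and let $\{a_n\}$ be a positive sequence with $n^{\alpha}(a_na_{n+2}/a_{n+1}^2 - 1) \to c_1$. Define $b_n = a_na_{n+2} - a_{n+1}^2$ (so $b_n > 0$ eventually). If $\alpha \ge 2$, then $n^2(b_n b_{n+2}/b_{n+1}^2 - 1)$ converges to $2c_1 + \alpha$ when $\alpha = 2$ and to $\alpha$ when $\alpha > 2$; in both cases the limit is positive, so $\{a_n\}$ is asymptotically 2-log-convex. -/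
/-!
Write `d n = a n a (n+2) / a (n+1)^2 - 1`, so that `b n = a (n+1)^2 d n`, and `s n = n^α d n`;
the hypothesis says `s n = c₁ + o(n⁻²)`. Then
`b n b (n+2) / b (n+1)^2 = (1 + d (n+1))^2 · s n s (n+2) / s (n+1)^2 · ((n+1)^2 / (n (n+2)))^α`,
and after subtracting 1 and multiplying by `n^2` the three factors contribute `2 c₁ lim n^(2-α)`,
`0` (the second-order error of `s` is `o(n⁻²)`) and `α` (the derivative of `x ↦ x^α` at `1`,
since `(n+1)^2 / (n (n+2)) = 1 + 1 / (n (n+2))`). The limit is positive, which gives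
log-convexity of `b` eventually.
-/

open Filter Topology

section Asymptotics

variable {ι : Type*} {l : Filter ι} {f : ι → ℝ}

theorem tendsto_of_tendsto_mul_sub {u : ι → ℝ} {c L : ℝ} (hf : Tendsto f l atTop)
    (h : Tendsto (fun i => f i * (u i - c)) l (𝓝 L)) : Tendsto u l (𝓝 c) := by
  have h' := (h.mul hf.inv_tendsto_atTop).add_const c
  rw [mul_zero, zero_add] at h'
  refine h'.congr' ?_
  filter_upwards [hf.eventually_ne_atTop 0] with i hi
  simp only [Pi.inv_apply]
  field_simp
  ring

theorem tendsto_mul_mul_sub_one {x y : ι → ℝ} {L M : ℝ} (hf : Tendsto f l atTop)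
    (hx : Tendsto (fun i => f i * (x i - 1)) l (𝓝 L))
    (hy : Tendsto (fun i => f i * (y i - 1)) l (𝓝 M)) :
    Tendsto (fun i => f i * (x i * y i - 1)) l (𝓝 (L + M)) := by
  have h := (hx.mul (tendsto_of_tendsto_mul_sub hf hy)).add hy
  rw [mul_one] at h
  exact h.congr fun i => by ring

theorem HasDerivAt.tendsto_mul_sub_comp {g : ℝ → ℝ} {g' x₀ L : ℝ} {x : ι → ℝ}
    (hg : HasDerivAt g g' x₀) (hx : Tendsto x l (𝓝[≠] x₀))
    (h : Tendsto (fun i => f i * (x i - x₀)) l (𝓝 L)) :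
    Tendsto (fun i => f i * (g (x i) - g x₀)) l (𝓝 (g' * L)) := by
  refine (((hasDerivAt_iff_tendsto_slope.mp hg).comp hx).mul h).congr' ?_
  filter_upwards [(tendsto_nhdsWithin_iff.mp hx).2] with i hi
  have : x i - x₀ ≠ 0 := sub_ne_zero.2 hi
  simp only [Function.comp_apply, slope_def_field]
  field_simp

end Asymptotics

theorem tendsto_natCast_sq_atTop : Tendsto (fun n : ℕ => (n : ℝ) ^ 2) atTop atTop :=
  (tendsto_pow_atTop two_ne_zero).comp tendsto_natCast_atTop_atTop

theorem tendsto_natCast_sq_mul_comp_add {u : ℕ → ℝ} {L : ℝ} (k : ℕ)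
    (h : Tendsto (fun n : ℕ => (n : ℝ) ^ 2 * u n) atTop (𝓝 L)) :
    Tendsto (fun n : ℕ => (n : ℝ) ^ 2 * u (n + k)) atTop (𝓝 L) := by
  have hq : Tendsto (fun n : ℕ => ((n : ℝ) / (n + k)) ^ 2) atTop (𝓝 1) := by
    simpa using (tendsto_natCast_div_add_atTop (k : ℝ)).pow 2
  have h' := hq.mul (h.comp (tendsto_add_atTop_nat k))
  rw [one_mul] at h'
  refine h'.congr' ?_
  filter_upwards [eventually_ge_atTop 1] with n hn
  have : (0 : ℝ) < n + k := by positivity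
  simp only [Function.comp_apply]
  push_cast
  field_simp

theorem tendsto_natCast_sq_mul_ratio_sub_one {s : ℕ → ℝ} {c : ℝ} (hc : c ≠ 0)
    (h : Tendsto (fun n : ℕ => (n : ℝ) ^ 2 * (s n - c)) atTop (𝓝 0)) :
    Tendsto (fun n : ℕ => (n : ℝ) ^ 2 * (s n * s (n + 2) / s (n + 1) ^ 2 - 1)) atTop (𝓝 0) := by
  have hs := tendsto_of_tendsto_mul_sub tendsto_natCast_sq_atTop h
  have hs₁ := hs.comp (tendsto_add_atTop_nat 1)
  have hs₂ := hs.comp (tendsto_add_atTop_nat 2)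
  -- `s n s (n+2) - s (n+1)^2 = (s n - c) s (n+2) + c (s (n+2) - c) - (s (n+1) - c)(s (n+1) + c)`
  have hnum := ((h.mul hs₂).add ((tendsto_natCast_sq_mul_comp_add 2 h).const_mul c)).sub
    ((tendsto_natCast_sq_mul_comp_add 1 h).mul (hs₁.add_const c))
  rw [zero_mul, mul_zero, zero_mul, add_zero, sub_zero] at hnum
  have hden : Tendsto (fun n => s (n + 1) ^ 2) atTop (𝓝 (c ^ 2)) := hs₁.pow 2
  have h' := hnum.div hden (pow_ne_zero 2 hc)
  rw [zero_div] at h'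
  refine h'.congr' ?_
  filter_upwards [hs₁.eventually_ne hc] with n hn
  simp only [Function.comp_apply, Pi.div_apply] at hn ⊢
  field_simp
  ring

theorem tendsto_natCast_sq_mul_rpow_ratio_sub_one (α : ℝ) :
    Tendsto (fun n : ℕ => (n : ℝ) ^ 2 *
      ((((n : ℝ) + 1) ^ 2 / ((n : ℝ) * (n + 2))) ^ α - 1)) atTop (𝓝 α) := by
  have h : Tendsto (fun n : ℕ => (n : ℝ) ^ 2 * (((n : ℝ) + 1) ^ 2 / ((n : ℝ) * (n + 2)) - 1))
      atTop (𝓝 1) := by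
    refine (tendsto_natCast_div_add_atTop (2 : ℝ)).congr' ?_
    filter_upwards [eventually_ge_atTop 1] with n hn
    have : (0 : ℝ) < n := by exact_mod_cast hn
    field_simp
    ring
  have hx : Tendsto (fun n : ℕ => ((n : ℝ) + 1) ^ 2 / ((n : ℝ) * (n + 2))) atTop (𝓝[≠] 1) := by
    refine tendsto_nhdsWithin_iff.mpr ⟨tendsto_of_tendsto_mul_sub tendsto_natCast_sq_atTop h, ?_⟩
    filter_upwards [h.eventually_ne one_ne_zero] with n hn hx
    simp only [Set.mem_singleton_iff.mp hx, sub_self, mul_zero, ne_eq, not_true_eq_false] at hn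
  have hrpow : HasDerivAt (fun x : ℝ => x ^ α) α 1 := by
    simpa using Real.hasDerivAt_rpow_const (p := α) (x := 1) (Or.inl one_ne_zero)
  simpa using hrpow.tendsto_mul_sub_comp hx h

theorem tendsto_natCast_rpow_two_sub {α : ℝ} (hα : 2 ≤ α) :
    Tendsto (fun n : ℕ => (n : ℝ) ^ (2 - α)) atTop (𝓝 (if α = 2 then 1 else 0)) := by
  rcases hα.eq_or_lt with rfl | hlt
  · simp
  · rw [if_neg hlt.ne']
    simpa [neg_sub, Function.comp_def] using
      (tendsto_rpow_neg_atTop (by linarith : 0 < α - 2)).comp tendsto_natCast_atTop_atTop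

section RpowScaled

variable {d : ℕ → ℝ} {c α : ℝ}

theorem tendsto_natCast_sq_mul_one_add_sq_sub_one {L : ℝ}
    (hd : Tendsto (fun n : ℕ => (n : ℝ) ^ 2 * ((n : ℝ) ^ α * d n - c)) atTop (𝓝 0))
    (hL : Tendsto (fun n : ℕ => (n : ℝ) ^ (2 - α)) atTop (𝓝 L)) :
    Tendsto (fun n : ℕ => (n : ℝ) ^ 2 * ((1 + d (n + 1)) ^ 2 - 1)) atTop (𝓝 (2 * c * L)) := by
  have hsq : Tendsto (fun n : ℕ => (n : ℝ) ^ 2 * d n) atTop (𝓝 (L * c)) := by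
    refine (hL.mul (tendsto_of_tendsto_mul_sub tendsto_natCast_sq_atTop hd)).congr' ?_
    filter_upwards [eventually_gt_atTop 0] with n hn
    have : (0 : ℝ) < n := by exact_mod_cast hn
    rw [← mul_assoc, ← Real.rpow_add this, sub_add_cancel, Real.rpow_two]
  have h₁ : Tendsto (fun n : ℕ => (n : ℝ) ^ 2 * ((1 + d (n + 1)) - 1)) atTop (𝓝 (L * c)) := by
    simpa using tendsto_natCast_sq_mul_comp_add 1 hsq
  have h := tendsto_mul_mul_sub_one tendsto_natCast_sq_atTop h₁ h₁
  rw [show L * c + L * c = 2 * c * L by ring] at h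
  exact h.congr fun n => by ring

theorem tendsto_natCast_sq_mul_ratio_sub_one_of_rpow (hc : c ≠ 0)
    (hd : Tendsto (fun n : ℕ => (n : ℝ) ^ 2 * ((n : ℝ) ^ α * d n - c)) atTop (𝓝 0)) :
    Tendsto (fun n : ℕ => (n : ℝ) ^ 2 * (d n * d (n + 2) / d (n + 1) ^ 2 - 1)) atTop (𝓝 α) := by
  have h := tendsto_mul_mul_sub_one tendsto_natCast_sq_atTop
    (tendsto_natCast_sq_mul_ratio_sub_one hc hd) (tendsto_natCast_sq_mul_rpow_ratio_sub_one α)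
  rw [zero_add] at h
  refine h.congr' ?_
  filter_upwards [eventually_gt_atTop 0] with n hn
  have h₀ : (0 : ℝ) < n := by exact_mod_cast hn
  have : (n : ℝ) ^ α ≠ 0 := (Real.rpow_pos_of_pos h₀ α).ne'
  have : ((n : ℝ) + 1) ^ α ≠ 0 := (Real.rpow_pos_of_pos (by positivity) α).ne'
  have : ((n : ℝ) + 2) ^ α ≠ 0 := (Real.rpow_pos_of_pos (by positivity) α).ne'
  push_cast
  rw [Real.div_rpow (by positivity) (by positivity), Real.mul_rpow h₀.le (by positivity),
    ← Real.rpow_pow_comm (by positivity)]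
  rcases eq_or_ne (d (n + 1)) 0 with h₁ | h₁
  · simp [h₁]
  · field_simp

end RpowScaled

noncomputable def logConvexDefect (a : ℕ → ℝ) (n : ℕ) : ℝ :=
  a n * a (n + 2) / a (n + 1) ^ 2 - 1

theorem sq_mul_logConvexDefect {a : ℕ → ℝ} {n : ℕ} (ha : a (n + 1) ≠ 0) :
    a (n + 1) ^ 2 * logConvexDefect a n = a n * a (n + 2) - a (n + 1) ^ 2 := by
  rw [logConvexDefect]
  field_simp

theorem logConvexDefect_ratio {a b : ℕ → ℝ} (ha : ∀ n, a n ≠ 0)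
    (hb : ∀ n, b n = a n * a (n + 2) - a (n + 1) ^ 2) (n : ℕ) :
    b n * b (n + 2) / b (n + 1) ^ 2 = (1 + logConvexDefect a (n + 1)) ^ 2 *
      (logConvexDefect a n * logConvexDefect a (n + 2) / logConvexDefect a (n + 1) ^ 2) := by
  have hshift : 1 + logConvexDefect a (n + 1) = a (n + 1) * a (n + 3) / a (n + 2) ^ 2 := by
    rw [logConvexDefect, add_sub_cancel]
  simp only [hb, ← sq_mul_logConvexDefect (ha _)]
  rw [hshift]
  have := ha (n + 1)
  have := ha (n + 2)
  have := ha (n + 3)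
  rcases eq_or_ne (logConvexDefect a (n + 1)) 0 with h₁ | h₁
  · simp [h₁]
  · field_simp

theorem exists_forall_sq_le_mul_of_tendsto {b : ℕ → ℝ} {l : ℝ} (hb : ∀ᶠ n in atTop, 0 < b n)
    (hl : 0 < l)
    (h : Tendsto (fun n : ℕ => (n : ℝ) ^ 2 * (b n * b (n + 2) / b (n + 1) ^ 2 - 1)) atTop (𝓝 l)) :
    ∃ N : ℕ, ∀ n ≥ N, 0 ≤ b n ∧ b n * b (n + 2) ≥ b (n + 1) ^ 2 := by
  refine eventually_atTop.mp ?_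
  filter_upwards [hb, (tendsto_add_atTop_nat 1).eventually hb, h.eventually (eventually_gt_nhds hl)]
    with n hb₀ hb₁ hn
  have hratio : 1 < b n * b (n + 2) / b (n + 1) ^ 2 :=
    sub_pos.mp (pos_of_mul_pos_right hn (sq_nonneg _))
  exact ⟨hb₀.le, ((one_lt_div (by positivity)).mp hratio).le⟩

theorem stmt_19 (a : ℕ → ℝ) (hpos : ∀ n, 0 < a n) (c₁ α : ℝ) (hc : 0 < c₁) (hα : 2 ≤ α)
    (h : Filter.Tendsto
      (fun n : ℕ => (n : ℝ) ^ (α + 2) *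
        (a n * a (n + 2) / (a (n + 1)) ^ 2 - 1 - c₁ / (n : ℝ) ^ α))
      Filter.atTop (nhds 0))
    (b : ℕ → ℝ) (hb : ∀ n, b n = a n * a (n + 2) - (a (n + 1)) ^ 2) :
    (∃ N : ℕ, ∀ n ≥ N, 0 < b n) ∧
    (α = 2 →
      Filter.Tendsto (fun n : ℕ => (n : ℝ) ^ 2 * (b n * b (n + 2) / (b (n + 1)) ^ 2 - 1))
        Filter.atTop (nhds (2 * c₁ + α))) ∧
    (2 < α →
      Filter.Tendsto (fun n : ℕ => (n : ℝ) ^ 2 * (b n * b (n + 2) / (b (n + 1)) ^ 2 - 1))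
        Filter.atTop (nhds α)) ∧
    (∃ N : ℕ, ∀ n ≥ N, 0 ≤ b n ∧ b n * b (n + 2) ≥ (b (n + 1)) ^ 2) := by
  have ha n : a n ≠ 0 := (hpos n).ne'
  have hd : Tendsto (fun n : ℕ => (n : ℝ) ^ 2 * ((n : ℝ) ^ α * logConvexDefect a n - c₁))
      atTop (𝓝 0) := by
    refine h.congr' ?_
    filter_upwards [eventually_gt_atTop 0] with n hn
    have h₀ : (0 : ℝ) < n := by exact_mod_cast hn
    have : (n : ℝ) ^ α ≠ 0 := (Real.rpow_pos_of_pos h₀ α).ne'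
    rw [Real.rpow_add h₀, Real.rpow_two, logConvexDefect]
    field_simp
  have hb_pos : ∀ᶠ n in atTop, 0 < b n := by
    have hs := tendsto_of_tendsto_mul_sub tendsto_natCast_sq_atTop hd
    filter_upwards [hs.eventually (eventually_gt_nhds hc)] with n hn
    rw [hb, ← sq_mul_logConvexDefect (ha _)]
    have := pos_of_mul_pos_right hn (Real.rpow_nonneg n.cast_nonneg α)
    have := ha (n + 1)
    positivity
  have hlim := tendsto_mul_mul_sub_one tendsto_natCast_sq_atTop
    (tendsto_natCast_sq_mul_one_add_sq_sub_one hd (tendsto_natCast_rpow_two_sub hα))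
    (tendsto_natCast_sq_mul_ratio_sub_one_of_rpow hc.ne' hd)
  simp only [← logConvexDefect_ratio ha hb] at hlim
  refine ⟨eventually_atTop.mp hb_pos, fun h2 => by simpa [h2] using hlim,
    fun h2 => by simpa [h2.ne'] using hlim, exists_forall_sq_le_mul_of_tendsto hb_pos ?_ hlim⟩
  split_ifs <;> linarith
end
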